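/- (Theorem 1, robust MD-CRT for general moduli.) Let M₁,…,M_L (L ≥ 2) be distinct nonsingular D×D integer matrices, let M_{ij} be a gcld of M_i and M_j for i ≠ j, and let R be an lcrm of M₁,…,M_L. Let l₀ ∈ {1,…,L} satisfy min_{j≠l₀} λ(M_{l₀j}) = max_{1≤i≤L} min_{j≠i} λ(M_{ij}). Let m ∈ ℤ^D have folding vectors n_i = ⌊M_i⁻¹m⌋ and remainders r_i = m − M_i n_i, and suppose ⌊M_{l₀}⁻¹m⌋ ∈ N(M_{l₀}⁻¹R). Let erroneous remainders r̃_i = r_i + Δr_i satisfy ‖Δr_i‖₂ ≤ τ for 1 ≤ i ≤ L, where τ < min_{j≠l₀} λ(M_{l₀j})/4. Then: (a) for each j ≠ l₀, r_j − r_{l₀} is the unique minimizer of ‖v − (r̃_j − r̃_{l₀})‖₂ over v ∈ L(M_{l₀j}); (b) M_{l₀}n_{l₀} is the unique vector z ∈ N(R) satisfying z ∈ L(M_{l₀}) and z − (r_j − r_{l₀}) ∈ L(M_j) for all j ≠ l₀, and M_j n_j = M_{l₀}n_{l₀} − (r_j − r_{l₀}) for all j ≠ l₀; (c) the reconstruction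 m̃ = (1/L)∑_{i=1}^L (M_i n_i + r̃_i) satisfies ‖m̃ − m‖₂ ≤ τ. -/

import Mathlib

open Matrix

noncomputable section

/-- Real cast of an integer matrix. -/
def rmat {D : ℕ} (A : Matrix (Fin D) (Fin D) ℤ) : Matrix (Fin D) (Fin D) ℝ :=
  A.map Int.cast

/-- Real cast of an integer vector, viewed in Euclidean space. -/
def rvec {D : ℕ} (v : Fin D → ℤ) : EuclideanSpace ℝ (Fin D) :=
  WithLp.toLp 2 fun i => (v i : ℝ)

/-- The lattice generated by a real matrix. -/
def latt {D : ℕ} (A : Matrix (Fin D) (Fin D) ℝ) : Set (EuclideanSpace ℝ (Fin D)) :=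
  {v | ∃ n : Fin D → ℤ, v = A.mulVec fun i => (n i : ℝ)}

/-- Minimum (Euclidean) distance of the lattice generated by a real matrix. -/
def lamMin {D : ℕ} (A : Matrix (Fin D) (Fin D) ℝ) : ℝ :=
  sInf {r | ∃ v ∈ latt A, v ≠ 0 ∧ ‖v‖ = r}

/-- The set of integer vectors of the lattice generated by an integer matrix. -/
def lattZ {D : ℕ} (A : Matrix (Fin D) (Fin D) ℤ) : Set (Fin D → ℤ) :=
  {v | ∃ n : Fin D → ℤ, v = A.mulVec n}

/-- N(A): the integer points in the fundamental parallelepiped of a real matrix A. -/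
def NN {D : ℕ} (A : Matrix (Fin D) (Fin D) ℝ) : Set (Fin D → ℤ) :=
  {k | ∃ x : Fin D → ℝ, (∀ i, 0 ≤ x i ∧ x i < 1) ∧ (fun i => (k i : ℝ)) = A.mulVec x}

/-- A is a left divisor of B (i.e. A⁻¹B is an integer matrix). -/
def LeftDvd {D : ℕ} (A B : Matrix (Fin D) (Fin D) ℤ) : Prop :=
  ∃ C : Matrix (Fin D) (Fin D) ℤ, B = A * C

/-- G is a greatest common left divisor of A and B. -/
def IsGcld {D : ℕ} (G A B : Matrix (Fin D) (Fin D) ℤ) : Prop :=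
  G.det ≠ 0 ∧ LeftDvd G A ∧ LeftDvd G B ∧
    ∀ C : Matrix (Fin D) (Fin D) ℤ, C.det ≠ 0 → LeftDvd C A → LeftDvd C B → LeftDvd C G

/-- R is a (nonsingular) right multiple of B. -/
def RightMulOf {D : ℕ} (R B : Matrix (Fin D) (Fin D) ℤ) : Prop :=
  ∃ P : Matrix (Fin D) (Fin D) ℤ, P.det ≠ 0 ∧ R = B * P

/-- R is a least common right multiple of the family M. -/
def IsLcrm {D : ℕ} {ι : Type*} (R : Matrix (Fin D) (Fin D) ℤ)
    (M : ι → Matrix (Fin D) (Fin D) ℤ) : Prop :=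
  R.det ≠ 0 ∧ (∀ i, RightMulOf R (M i)) ∧
    ∀ R' : Matrix (Fin D) (Fin D) ℤ, R'.det ≠ 0 → (∀ i, RightMulOf R' (M i)) →
      RightMulOf R' R

/-- Folding vector ⌊A⁻¹ m⌋ (element-wise floor). -/
def fold {D : ℕ} (A : Matrix (Fin D) (Fin D) ℤ) (m : Fin D → ℤ) : Fin D → ℤ :=
  fun i => ⌊((rmat A)⁻¹.mulVec fun j => (m j : ℝ)) i⌋

/-- min_{j≠i} λ(L(G i j)), as an infimum of a (finite, nonempty) set of reals. -/
def minOver {D L : ℕ} (G : Fin L → Fin L → Matrix (Fin D) (Fin D) ℤ) (i : Fin L) : ℝ :=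
  sInf {r | ∃ j, j ≠ i ∧ r = lamMin (rmat (G i j))}

lemma rvec_mulVec {D : ℕ} (A : Matrix (Fin D) (Fin D) ℤ) (v : Fin D → ℤ) :
    rvec (A.mulVec v) = (rmat A).mulVec (rvec v) := by
  funext i
  simp [rvec, rmat, Matrix.mulVec, dotProduct, Matrix.map_apply]

lemma rmat_det {D : ℕ} (A : Matrix (Fin D) (Fin D) ℤ) : (rmat A).det = (A.det : ℝ) := by
  have := RingHom.map_det (Int.castRingHom ℝ) A
  simpa [rmat] using this.symm

/-- Key lattice lemma: an integer vector lying in every lattice L(Mᵢ) lies in L(R)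
when R is an lcrm of the Mᵢ. -/
lemma lattZ_lcrm {D : ℕ} {ι : Type*} {M : ι → Matrix (Fin D) (Fin D) ℤ}
    {R : Matrix (Fin D) (Fin D) ℤ} (hR : IsLcrm R M)
    {d : Fin D → ℤ} (hd : ∀ i, ∃ x, d = (M i).mulVec x) : ∃ c, d = R.mulVec c := by
  classical
  obtain ⟨hRdet, hRmul, hRleast⟩ := hR
  set S : Set (Fin D → ℤ) := insert d (Set.range fun j => R.mulVec (Pi.single j 1)) with hS
  set Λ : Submodule ℤ (Fin D → ℤ) := Submodule.span ℤ S with hΛ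
  have hsub : ∀ i, Λ ≤ LinearMap.range (Matrix.mulVecLin (M i)) := by
    intro i
    rw [hΛ, Submodule.span_le]
    rintro v (rfl | ⟨j, rfl⟩)
    · obtain ⟨x, hx⟩ := hd i; exact ⟨x, hx.symm⟩
    · obtain ⟨P, hPdet, hP⟩ := hRmul i
      exact ⟨P.mulVec (Pi.single j 1), by rw [Matrix.mulVecLin_apply, Matrix.mulVec_mulVec, ← hP]⟩
  have hcolR : ∀ j, R.mulVec (Pi.single j 1) ∈ Λ :=
    fun j => Submodule.subset_span (Set.mem_insert_of_mem _ ⟨j, rfl⟩)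
  have hdΛ : d ∈ Λ := Submodule.subset_span (Set.mem_insert _ _)
  -- columns of any matrix, as mulVec with single
  have hmv : ∀ (A : Matrix (Fin D) (Fin D) ℤ) (c : Fin D → ℤ),
      A.mulVec c = ∑ j, c j • A.mulVec (Pi.single j 1) := by
    intro A c
    funext i
    rw [Finset.sum_apply]
    simp [Matrix.mulVec_single, Matrix.mulVec, dotProduct, mul_comm]
  have hRinj : ∀ c : Fin D → ℤ, R.mulVec c = 0 → c = 0 := by
    intro c hc
    by_contra h
    exact hRdet (Matrix.exists_mulVec_eq_zero_iff.mp ⟨c, h, hc⟩)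
  obtain ⟨k, b⟩ := Submodule.basisOfPid (Pi.basisFun ℤ (Fin D)) Λ
  -- k = D
  have hkD : k = D := by
    have h1 : k ≤ D := by
      have := (Pi.basisFun ℤ (Fin D)).card_le_card_of_linearIndependent
        (b.linearIndependent.map' Λ.subtype Λ.ker_subtype)
      simpa using this
    have h2 : D ≤ k := by
      have hli : LinearIndependent ℤ (fun j => (⟨R.mulVec (Pi.single j 1), hcolR j⟩ : Λ)) := by
        rw [Fintype.linearIndependent_iff]
        intro g hg
        have hval : (R.mulVec g : Fin D → ℤ) = 0 := by
          have := congrArg (Submodule.subtype Λ) hg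
          simpa [map_sum, hmv R g] using this
        have := hRinj g hval
        intro j; rw [this]; rfl
      have := b.card_le_card_of_linearIndependent hli
      simpa using this
    omega
  set b' : Module.Basis (Fin D) ℤ Λ := b.reindex (finCongr hkD) with hb'
  set B : Matrix (Fin D) (Fin D) ℤ := Matrix.of fun i j => ((b' j : Fin D → ℤ) i) with hB
  have hBmul : ∀ c : Fin D → ℤ, B.mulVec c = ((∑ j, c j • b' j : Λ) : Fin D → ℤ) := by
    intro c
    funext i
    rw [Submodule.coe_sum, Finset.sum_apply]
    simp [hB, Matrix.mulVec, dotProduct, mul_comm]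
  have hBdet : B.det ≠ 0 := by
    intro h0
    obtain ⟨v, hv0, hv⟩ := Matrix.exists_mulVec_eq_zero_iff.mpr h0
    have : (∑ j, v j • b' j : Λ) = 0 := by
      apply Subtype.ext
      rw [← hBmul v, hv]; rfl
    have := Fintype.linearIndependent_iff.mp b'.linearIndependent v this
    exact hv0 (funext this)
  have hBcrm : ∀ i, RightMulOf B (M i) := by
    intro i
    have hmem : ∀ j, ∃ x, (b' j : Fin D → ℤ) = (M i).mulVec x := by
      intro j
      obtain ⟨x, hx⟩ := hsub i (b' j).2
      exact ⟨x, by rw [← Matrix.mulVecLin_apply, hx]⟩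
    choose X hX using hmem
    have hBQ : B = M i * Matrix.of (fun a j => X j a) := by
      ext a j
      rw [Matrix.mul_apply]
      have := congrFun (hX j) a
      simpa [hB, Matrix.mulVec, dotProduct] using this
    refine ⟨Matrix.of (fun a j => X j a), ?_, hBQ⟩
    intro h0
    apply hBdet
    rw [hBQ, Matrix.det_mul, h0, mul_zero]
  obtain ⟨P, hPdet, hBP⟩ := hRleast B hBdet hBcrm
  refine ⟨P.mulVec (fun j => b'.repr ⟨d, hdΛ⟩ j), ?_⟩
  rw [Matrix.mulVec_mulVec, ← hBP, hBmul]
  have : (∑ j, b'.repr ⟨d, hdΛ⟩ j • b' j : Λ) = ⟨d, hdΛ⟩ := b'.sum_repr _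
  rw [this]

lemma rvec_eq_fun {D : ℕ} (v : Fin D → ℤ) : (fun i => ((v i : ℤ) : ℝ)) = rvec v := rfl

/-- Two integer points of the fundamental domain differing by a lattice vector are equal. -/
lemma NN_unique {D : ℕ} {A : Matrix (Fin D) (Fin D) ℝ} (hA : A.det ≠ 0)
    {z w : Fin D → ℤ} (hz : z ∈ NN A) (hw : w ∈ NN A)
    (hzw : ∃ c : Fin D → ℤ, rvec (z - w) = A.mulVec (rvec c)) : z = w := by
  obtain ⟨x, hx1, hx2⟩ := hz
  obtain ⟨y, hy1, hy2⟩ := hw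
  obtain ⟨c, hc⟩ := hzw
  set cr : Fin D → ℝ := fun i => (c i : ℝ) with hcr
  have hc' : (fun i => ((z i - w i : ℤ) : ℝ)) = A.mulVec cr := hc
  have hxy : A.mulVec (x - y - cr) = 0 := by
    rw [Matrix.mulVec_sub, Matrix.mulVec_sub, ← hx2, ← hy2, ← hc']
    funext i
    simp only [Pi.sub_apply, Pi.zero_apply]
    push_cast
    ring
  have hker : x - y - cr = 0 := by
    by_contra h
    exact hA (Matrix.exists_mulVec_eq_zero_iff.mp ⟨_, h, hxy⟩)
  have hc0 : ∀ i, c i = 0 := by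
    intro i
    have h1 : x i - y i - (c i : ℝ) = 0 := congrFun hker i
    have hx := hx1 i
    have hy := hy1 i
    have h2 : (-1 : ℤ) < c i := by
      have : (-1 : ℝ) < (c i : ℝ) := by linarith
      exact_mod_cast this
    have h3 : c i < 1 := by
      have : ((c i : ℝ) : ℝ) < 1 := by linarith
      exact_mod_cast this
    omega
  funext i
  have h1 : x i - y i - (c i : ℝ) = 0 := congrFun hker i
  have : x = y := by
    funext i
    have := congrFun hker i
    simp only [hcr, Pi.sub_apply, Pi.zero_apply] at this
    rw [hc0 i] at this
    push_cast at this
    linarith [this]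
  have hz' : ((z i : ℤ) : ℝ) = ((w i : ℤ) : ℝ) := by
    have e1 := congrFun hx2 i
    have e2 := congrFun hy2 i
    rw [e1, e2, this]
  exact_mod_cast hz'

lemma rvec_add' {D : ℕ} (a b : Fin D → ℤ) : rvec (a + b) = rvec a + rvec b :=
  PiLp.ext fun i => by
    show ((a i + b i : ℤ) : ℝ) = (a i : ℝ) + (b i : ℝ)
    push_cast; ring

/-- Theorem 1, robust MD-CRT for general moduli. -/
theorem robust_mdcrt_general {D L : ℕ} (hD : 0 < D) (hL : 2 ≤ L)
    (M : Fin L → Matrix (Fin D) (Fin D) ℤ)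
    (hdet : ∀ i, (M i).det ≠ 0)
    (hdistinct : ∀ i j, i ≠ j → M i ≠ M j)
    (G : Fin L → Fin L → Matrix (Fin D) (Fin D) ℤ)
    (hG : ∀ i j, i ≠ j → IsGcld (G i j) (M i) (M j))
    (R : Matrix (Fin D) (Fin D) ℤ) (hR : IsLcrm R M)
    (l₀ : Fin L)
    (hl₀ : minOver G l₀ = sSup {r | ∃ i, r = minOver G i})
    (m : Fin D → ℤ)
    (n : Fin L → Fin D → ℤ) (hn : ∀ i, n i = fold (M i) m)
    (r : Fin L → Fin D → ℤ) (hr : ∀ i, r i = m - (M i).mulVec (n i))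
    (hrange : fold (M l₀) m ∈ NN ((rmat (M l₀))⁻¹ * rmat R))
    (Δr rt : Fin L → Fin D → ℤ) (hrt : ∀ i, rt i = r i + Δr i)
    (τ : ℝ) (hτ : ∀ i, ‖rvec (Δr i)‖ ≤ τ)
    (hbound : τ < minOver G l₀ / 4) :
    -- (a) r_j − r_{l₀} is the unique minimizer of ‖v − (r̃_j − r̃_{l₀})‖₂ over L(M_{l₀j})
    (∀ j, j ≠ l₀ → rvec (r j - r l₀) ∈ latt (rmat (G l₀ j)) ∧
      ∀ v ∈ latt (rmat (G l₀ j)), v ≠ rvec (r j - r l₀) →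
        ‖rvec (r j - r l₀) - (rvec (rt j) - rvec (rt l₀))‖ <
          ‖v - (rvec (rt j) - rvec (rt l₀))‖) ∧
    -- (b) M_{l₀}n_{l₀} is the unique z ∈ N(R) with z ∈ L(M_{l₀}) and
    --     z − (r_j − r_{l₀}) ∈ L(M_j); and M_j n_j = M_{l₀}n_{l₀} − (r_j − r_{l₀})
    ((M l₀).mulVec (n l₀) ∈ NN (rmat R) ∧ (M l₀).mulVec (n l₀) ∈ lattZ (M l₀) ∧
      (∀ j, j ≠ l₀ → (M l₀).mulVec (n l₀) - (r j - r l₀) ∈ lattZ (M j)) ∧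
      (∀ z : Fin D → ℤ, z ∈ NN (rmat R) → z ∈ lattZ (M l₀) →
        (∀ j, j ≠ l₀ → z - (r j - r l₀) ∈ lattZ (M j)) → z = (M l₀).mulVec (n l₀)) ∧
      (∀ j, j ≠ l₀ → (M j).mulVec (n j) = (M l₀).mulVec (n l₀) - (r j - r l₀))) ∧
    -- (c) the reconstruction m̃ = (1/L) ∑ᵢ (M_i n_i + r̃_i) satisfies ‖m̃ − m‖₂ ≤ τ
    ‖(L : ℝ)⁻¹ • (∑ i, rvec ((M i).mulVec (n i) + rt i)) - rvec m‖ ≤ τ := by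
  classical
  have hτ0 : 0 ≤ τ := le_trans (norm_nonneg _) (hτ l₀)
  have hμ : 4 * τ < minOver G l₀ := by linarith
  have hkey : ∀ j, (M l₀).mulVec (n l₀) - (r j - r l₀) = (M j).mulVec (n j) := by
    intro j
    rw [hr j, hr l₀]
    abel
  refine ⟨?_, ⟨?_, ⟨n l₀, rfl⟩, fun j _ => ⟨n j, hkey j⟩, ?_, fun j _ => (hkey j).symm⟩, ?_⟩
  · -- part (a)
    intro j hj
    obtain ⟨hgdet, ⟨A₁, hA₁⟩, ⟨A₂, hA₂⟩, -⟩ := hG l₀ j (Ne.symm hj)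
    have hrd : r j - r l₀ = (G l₀ j).mulVec (A₁.mulVec (n l₀) - A₂.mulVec (n j)) := by
      have h1 : r j - r l₀ = (M l₀).mulVec (n l₀) - (M j).mulVec (n j) := by
        rw [hr j, hr l₀]; abel
      rw [h1, hA₁, hA₂, Matrix.mulVec_sub, ← Matrix.mulVec_mulVec, ← Matrix.mulVec_mulVec]
    have hmem : rvec (r j - r l₀) ∈ latt (rmat (G l₀ j)) :=
      ⟨A₁.mulVec (n l₀) - A₂.mulVec (n j), by rw [hrd, rvec_mulVec]; rfl⟩
    refine ⟨hmem, ?_⟩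
    intro v hv hvne
    have hδ : ‖rvec (r j - r l₀) - (rvec (rt j) - rvec (rt l₀))‖ ≤ 2 * τ := by
      have heq : rvec (r j - r l₀) - (rvec (rt j) - rvec (rt l₀))
          = rvec (Δr l₀) - rvec (Δr j) := PiLp.ext fun i => by
        show ((r j i - r l₀ i : ℤ) : ℝ) - (((rt j i : ℤ) : ℝ) - ((rt l₀ i : ℤ) : ℝ))
            = ((Δr l₀ i : ℤ) : ℝ) - ((Δr j i : ℤ) : ℝ)
        rw [hrt j, hrt l₀]
        show ((r j i - r l₀ i : ℤ) : ℝ)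
            - (((r j i + Δr j i : ℤ) : ℝ) - ((r l₀ i + Δr l₀ i : ℤ) : ℝ)) = _
        push_cast; ring
      rw [heq]
      calc ‖rvec (Δr l₀) - rvec (Δr j)‖ ≤ ‖rvec (Δr l₀)‖ + ‖rvec (Δr j)‖ := norm_sub_le _ _
        _ ≤ τ + τ := add_le_add (hτ l₀) (hτ j)
        _ = 2 * τ := by ring
    -- v - target is a nonzero lattice vector
    obtain ⟨a, ha⟩ := hv
    obtain ⟨bb, hb⟩ := hmem
    have hdiffmem : v - rvec (r j - r l₀) ∈ latt (rmat (G l₀ j)) := by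
      refine ⟨a - bb, ?_⟩
      rw [WithLp.ofLp_sub, ha, hb, ← Matrix.mulVec_sub]
      exact congrArg _ (funext fun i => by
        show (a i : ℝ) - (bb i : ℝ) = ((a i - bb i : ℤ) : ℝ)
        push_cast; ring)
    have hlam : lamMin (rmat (G l₀ j)) ≤ ‖v - rvec (r j - r l₀)‖ := by
      apply csInf_le
      · exact ⟨0, by rintro s ⟨w, _, _, rfl⟩; exact norm_nonneg w⟩
      · exact ⟨v - rvec (r j - r l₀), hdiffmem, sub_ne_zero.mpr hvne, rfl⟩
    have hmin : minOver G l₀ ≤ lamMin (rmat (G l₀ j)) := by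
      apply csInf_le
      · apply Set.Finite.bddBelow
        apply Set.Finite.subset (Set.finite_range fun j' : Fin L => lamMin (rmat (G l₀ j')))
        rintro s ⟨j', _, rfl⟩
        exact ⟨j', rfl⟩
      · exact ⟨j, hj, rfl⟩
    have htri : ‖v - rvec (r j - r l₀)‖ ≤ ‖v - (rvec (rt j) - rvec (rt l₀))‖
        + ‖rvec (r j - r l₀) - (rvec (rt j) - rvec (rt l₀))‖ := by
      have : v - rvec (r j - r l₀) = (v - (rvec (rt j) - rvec (rt l₀)))
          - (rvec (r j - r l₀) - (rvec (rt j) - rvec (rt l₀))) := by abel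
      rw [this]
      exact norm_sub_le _ _
    linarith
  · -- (b) NN membership
    obtain ⟨x, hx1, hx2⟩ := hrange
    refine ⟨x, hx1, ?_⟩
    have hMl : IsUnit (rmat (M l₀)).det := by
      rw [rmat_det]
      exact isUnit_iff_ne_zero.mpr (by exact_mod_cast hdet l₀)
    have e1 : (fun i => (((M l₀).mulVec (n l₀)) i : ℝ)) = (rmat (M l₀)).mulVec (rvec (n l₀)) :=
      rvec_mulVec (M l₀) (n l₀)
    rw [e1, hn l₀]
    have e2 : (rvec (fold (M l₀) m) : Fin D → ℝ) = ((rmat (M l₀))⁻¹ * rmat R).mulVec x := hx2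
    show (rmat (M l₀)).mulVec (rvec (fold (M l₀) m)) = (rmat R).mulVec x
    rw [e2, Matrix.mulVec_mulVec, Matrix.mul_nonsing_inv_cancel_left _ _ hMl]
  · -- (b) uniqueness
    intro z hz1 hz2 hz3
    obtain ⟨x0, hx0⟩ := hz2
    have hdall : ∀ i, ∃ x, z - (M l₀).mulVec (n l₀) = (M i).mulVec x := by
      intro i
      by_cases hi : i = l₀
      · subst hi
        exact ⟨x0 - n i, by rw [Matrix.mulVec_sub, ← hx0]⟩
      · obtain ⟨x, hx⟩ := hz3 i hi
        refine ⟨x - n i, ?_⟩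
        rw [Matrix.mulVec_sub, ← hx, ← hkey i]
        abel
    obtain ⟨c, hc⟩ := lattZ_lcrm ⟨hR.1, hR.2.1, hR.2.2⟩ hdall
    have hRdetR : (rmat R).det ≠ 0 := by
      rw [rmat_det]
      exact_mod_cast hR.1
    refine NN_unique hRdetR hz1 ?_ ⟨c, by rw [hc, rvec_mulVec]⟩
    -- need NN membership of M l₀ n l₀ again
    obtain ⟨x, hx1, hx2⟩ := hrange
    refine ⟨x, hx1, ?_⟩
    have hMl : IsUnit (rmat (M l₀)).det := by
      rw [rmat_det]
      exact isUnit_iff_ne_zero.mpr (by exact_mod_cast hdet l₀)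
    have e1 : (fun i => (((M l₀).mulVec (n l₀)) i : ℝ)) = (rmat (M l₀)).mulVec (rvec (n l₀)) :=
      rvec_mulVec (M l₀) (n l₀)
    rw [e1, hn l₀]
    show (rmat (M l₀)).mulVec (rvec (fold (M l₀) m)) = (rmat R).mulVec x
    have e2 : (rvec (fold (M l₀) m) : Fin D → ℝ) = ((rmat (M l₀))⁻¹ * rmat R).mulVec x := hx2
    rw [e2, Matrix.mulVec_mulVec, Matrix.mul_nonsing_inv_cancel_left _ _ hMl]
  · -- part (c)
    have hL0 : (L : ℝ) ≠ 0 := Nat.cast_ne_zero.mpr (by omega)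
    have hsummand : ∀ i, rvec ((M i).mulVec (n i) + rt i) = rvec m + rvec (Δr i) := by
      intro i
      have h1 : (M i).mulVec (n i) + rt i = m + Δr i := by rw [hrt i, hr i]; abel
      rw [h1, rvec_add']
    have hsum : (∑ i, rvec ((M i).mulVec (n i) + rt i))
        = (L : ℝ) • rvec m + ∑ i, rvec (Δr i) := by
      simp_rw [hsummand]
      rw [Finset.sum_add_distrib, Finset.sum_const, Finset.card_univ, Fintype.card_fin,
        ← Nat.cast_smul_eq_nsmul ℝ]
    rw [hsum, smul_add, smul_smul, inv_mul_cancel₀ hL0, one_smul]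
    have e3 : rvec m + (L : ℝ)⁻¹ • (∑ i, rvec (Δr i)) - rvec m
        = (L : ℝ)⁻¹ • (∑ i, rvec (Δr i)) := by abel
    rw [e3, norm_smul]
    have hns : ‖∑ i, rvec (Δr i)‖ ≤ (L : ℝ) * τ := by
      calc ‖∑ i, rvec (Δr i)‖ ≤ ∑ i, ‖rvec (Δr i)‖ := norm_sum_le _ _
        _ ≤ ∑ _i : Fin L, τ := Finset.sum_le_sum fun i _ => hτ i
        _ = (L : ℝ) * τ := by rw [Finset.sum_const, Finset.card_univ, Fintype.card_fin,
              nsmul_eq_mul]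
    have hinv : ‖(L : ℝ)⁻¹‖ = (L : ℝ)⁻¹ := by
      rw [Real.norm_eq_abs, abs_of_nonneg]
      positivity
    rw [hinv]
    calc (L : ℝ)⁻¹ * ‖∑ i, rvec (Δr i)‖ ≤ (L : ℝ)⁻¹ * ((L : ℝ) * τ) := by
          apply mul_le_mul_of_nonneg_left hns
          positivity
      _ = τ := by field_simp
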